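/- arXiv:1709.10061 — 4 statements merged into one kernel-verified Lean document; each statement's English description precedes it below -/
import Mathlib

section
/- Suppose |b̂_{i,s} − bᵢ| ≤ Uᵢ(s) holds for all i and s, let j = argmaxᵢ (Aᵢ x − b̂_{i,T_i} + Uᵢ(T_i)), and suppose A_j x − b̂_{j,T_j} − U_j(T_j) ≤ 0 and U_j(T_j) < ε₂/2. Then Aᵢ x ≤ bᵢ + ε₂ for every constraint i. -/
/-- On the good event, if `j` maximizes the UCB index, is not certifiably
violated (`A_j x − b̂_{j,T_j} − U_j(T_j) ≤ 0`), and `U_j(T_j) < ε₂/2`, then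
every constraint is violated by at most `ε₂`: `Aᵢ x ≤ bᵢ + ε₂` for all `i`. -/
theorem stmt13 (n m : ℕ) (A : Fin m → Fin n → ℝ) (b : Fin m → ℝ)
    (bhat : Fin m → ℕ → ℝ) (U : Fin m → ℕ → ℝ) (T : Fin m → ℕ)
    (x : Fin n → ℝ) (j : Fin m) (ε₂ : ℝ)
    (hgood : ∀ i, ∀ s : ℕ, 1 ≤ s → |bhat i s - b i| ≤ U i s)
    (hT : ∀ i, 1 ≤ T i)
    (hmax : ∀ i, (∑ l, A i l * x l) - bhat i (T i) + U i (T i) ≤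
      (∑ l, A j l * x l) - bhat j (T j) + U j (T j))
    (hnotviol : (∑ l, A j l * x l) - bhat j (T j) - U j (T j) ≤ 0)
    (hsmall : U j (T j) < ε₂ / 2) :
    ∀ i, (∑ l, A i l * x l) ≤ b i + ε₂ := by
  intro i
  have hbhat_le : bhat i (T i) - U i (T i) ≤ b i := by
    linarith [(abs_le.mp (hgood i (T i) (hT i))).2]
  calc (∑ l, A i l * x l)
      ≤ b i + ((∑ l, A i l * x l) - bhat i (T i) + U i (T i)) := by linarith
    _ ≤ b i + ((∑ l, A j l * x l) - bhat j (T j) + U j (T j)) := add_le_add_right (hmax i) _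
    _ ≤ b i + 2 * U j (T j) := by linarith
    _ ≤ b i + ε₂ := by linarith
end

section
/- Suppose |b̂_{i,s} − bᵢ| ≤ Uᵢ(s) holds for all i and s. If at round k the UCB subroutine samples constraint i at time t (so i has the largest index and none of the stopping conditions with threshold ε₂/2 hold), then 2Uᵢ(T_i(t)) ≥ max{ |Vᵢ(k)|, V*(k) − Vᵢ(k), ε₂/2 }, where Vᵢ(k) = Aᵢ x^{(k)} − bᵢ and V*(k) = maxᵢ Vᵢ(k). -/
/-! On the good event the confidence interval `[b̂ᵢ - Uᵢ, b̂ᵢ + Uᵢ]` contains `bᵢ`. Not stopping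
means `Aᵢx` lies within `Uᵢ` of `b̂ᵢ`, so `|Vᵢ| ≤ 2Uᵢ`. For the gap, the UCB index of any `j` is an
upper bound for `Vⱼ`, while the index of `i` overestimates `Vᵢ` by at most `2Uᵢ`; since `i` has the
largest index, `V* - Vᵢ ≤ 2Uᵢ`. -/

section ConfidenceBounds

variable {a b bhat u : ℝ}

theorem abs_sub_le_two_mul_of_abs_sub_le (ha : |a - bhat| ≤ u) (hb : |bhat - b| ≤ u) :
    |a - b| ≤ 2 * u := by
  linarith [abs_sub_le a bhat b]

theorem sub_le_ucb_of_abs_sub_le (hb : |bhat - b| ≤ u) : a - b ≤ a - bhat + u := by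
  linarith [(abs_le.mp hb).2]

theorem ucb_le_sub_add_two_mul_of_abs_sub_le (hb : |bhat - b| ≤ u) :
    a - bhat + u ≤ a - b + 2 * u := by
  linarith [(abs_le.mp hb).1]

end ConfidenceBounds

theorem sub_le_two_mul_of_forall_ucb_le {ι : Type*} {a b bhat u : ι → ℝ} {i : ι}
    (hconf : ∀ j, |bhat j - b j| ≤ u j) (hmax : ∀ j, a j - bhat j + u j ≤ a i - bhat i + u i)
    (j : ι) : (a j - b j) - (a i - b i) ≤ 2 * u i := by
  have := calc
    a j - b j ≤ a j - bhat j + u j := sub_le_ucb_of_abs_sub_le (hconf j)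
    _ ≤ a i - bhat i + u i := hmax j
    _ ≤ a i - b i + 2 * u i := ucb_le_sub_add_two_mul_of_abs_sub_le (hconf i)
  linarith

/-- On the good event, if constraint `i` is sampled at time `t` in round `k`
(i.e. `i` has the largest UCB index and no stopping condition holds), then
`2 Uᵢ(Tᵢ(t)) ≥ max { |Vᵢ(k)|, V*(k) − Vᵢ(k), ε₂/2 }`, where
`Vᵢ(k) = Aᵢ x^{(k)} − bᵢ` and `V*(k) = maxᵢ Vᵢ(k)`. -/
theorem stmt14 (n m : ℕ) (A : Fin m → Fin n → ℝ) (b : Fin m → ℝ)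
    (bhat : Fin m → ℕ → ℝ) (U : Fin m → ℕ → ℝ) (T : Fin m → ℕ)
    (x : Fin n → ℝ) (i : Fin m) (ε₂ : ℝ) (Vstar : ℝ)
    (hgood : ∀ i', ∀ s : ℕ, 1 ≤ s → |bhat i' s - b i'| ≤ U i' s)
    (hT : ∀ i', 1 ≤ T i')
    (hVstar : IsGreatest (Set.range fun i' => (∑ l, A i' l * x l) - b i') Vstar)
    (hmax : ∀ i', (∑ l, A i' l * x l) - bhat i' (T i') + U i' (T i') ≤
      (∑ l, A i l * x l) - bhat i (T i) + U i (T i))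
    (hnostop2 : ¬(0 < (∑ l, A i l * x l) - bhat i (T i) - U i (T i)))
    (hnostop3 : ¬((∑ l, A i l * x l) - bhat i (T i) + U i (T i) < 0))
    (hnostop4 : ¬(U i (T i) < ε₂ / 2)) :
    max (max |(∑ l, A i l * x l) - b i| (Vstar - ((∑ l, A i l * x l) - b i)))
      (ε₂ / 2) ≤ 2 * U i (T i) := by
  rw [not_lt] at hnostop2 hnostop3 hnostop4
  have hconf : ∀ j, |bhat j (T j) - b j| ≤ U j (T j) := fun j => hgood j (T j) (hT j)
  have hUnonneg : 0 ≤ U i (T i) := (abs_nonneg _).trans (hconf i)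
  have hnear : |(∑ l, A i l * x l) - bhat i (T i)| ≤ U i (T i) :=
    abs_le.mpr ⟨by linarith, by linarith⟩
  obtain ⟨j, rfl⟩ := hVstar.1
  refine max_le (max_le ?_ ?_) (by linarith)
  · exact abs_sub_le_two_mul_of_abs_sub_le hnear (hconf i)
  · exact sub_le_two_mul_of_forall_ucb_le (a := fun j => ∑ l, A j l * x l)
      (bhat := fun j => bhat j (T j)) hconf hmax j
end

section
/- For constants c > 0 and 0 < δ ≤ 1, if t ≥ 1 satisfies (1/t) · log(log(3t/2)/δ) ≥ c, then t ≤ (1/c) · log(2 log(3/(2cδ))/δ). -/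
/-!
Multiplying the hypothesis by `t` and exponentiating gives `δ e^{ct} ≤ log (3t/2)`. Writing
`s = √(3t/2)`, the bounds `2ct ≤ e^{ct}` and `log s ≤ s` turn this into `δ c s² ≤ (3/2) s`, so
`3t/2 = s² ≤ (3/(2cδ))²`; feeding `log (3t/2) ≤ 2 log (3/(2cδ))` back into
`ct ≤ log (log (3t/2)/δ)` gives the claim.
-/

open Real

lemma sqrt_le_of_mul_exp_le_log {k c δ t : ℝ} (hk : 0 < k) (hc : 0 < c) (hδ : 0 < δ)
    (ht : 0 < t) (h : δ * exp (c * t) ≤ log (k * t)) : √(k * t) ≤ k / (c * δ) := by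
  set s := √(k * t) with hs_def
  have hs0 : 0 < s := sqrt_pos.mpr (by positivity)
  have hs2 : s ^ 2 = k * t := sq_sqrt (by positivity)
  have hlog : log (k * t) = 2 * log s := by rw [hs_def, log_sqrt (by positivity)]; ring
  have hcts : δ * (c * t) ≤ s := by
    have : 2 * (δ * (c * t)) ≤ 2 * s :=
      calc 2 * (δ * (c * t)) = δ * (2 * (c * t)) := by ring
        _ ≤ δ * exp (c * t) := mul_le_mul_of_nonneg_left two_mul_le_exp hδ.le
        _ ≤ 2 * log s := hlog ▸ h
        _ ≤ 2 * s := by gcongr; exact log_le_self hs0.le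
    linarith
  rw [le_div_iff₀ (by positivity)]
  have : s * (s * (c * δ)) ≤ s * k := by nlinarith
  exact le_of_mul_le_mul_left this hs0

lemma log_le_two_mul_log_of_mul_exp_le_log {k c δ t : ℝ} (hk : 0 < k) (hc : 0 < c)
    (hδ : 0 < δ) (ht : 0 < t) (h : δ * exp (c * t) ≤ log (k * t)) :
    log (k * t) ≤ 2 * log (k / (c * δ)) := by
  have hkt : 0 < k * t := by positivity
  calc log (k * t) = 2 * log √(k * t) := by rw [log_sqrt hkt.le]; ring
    _ ≤ 2 * log (k / (c * δ)) := by
      gcongr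
      exact sqrt_le_of_mul_exp_le_log hk hc hδ ht h

theorem stmt15_general (c δ t : ℝ) (hc : 0 < c) (hδ0 : 0 < δ) (ht : 1 ≤ t)
    (h : c ≤ (1 / t) * Real.log (Real.log (3 * t / 2) / δ)) :
    t ≤ (1 / c) * Real.log (2 * Real.log (3 / (2 * c * δ)) / δ) := by
  have ht0 : 0 < t := by linarith
  rw [one_div, inv_mul_eq_div, le_div_iff₀ ht0, show 3 * t / 2 = 3 / 2 * t by ring] at h
  have hlog_pos : 0 < log (3 / 2 * t) / δ := div_pos (log_pos (by linarith)) hδ0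
  have hexp : δ * exp (c * t) ≤ log (3 / 2 * t) := by
    rw [← le_div_iff₀' hδ0, ← le_log_iff_exp_le hlog_pos]
    exact h
  have hbound := log_le_two_mul_log_of_mul_exp_le_log (by norm_num) hc hδ0 ht0 hexp
  rw [show (3 / 2 : ℝ) / (c * δ) = 3 / (2 * c * δ) by field_simp] at hbound
  rw [one_div, inv_mul_eq_div, le_div_iff₀ hc, mul_comm t]
  calc c * t ≤ log (log (3 / 2 * t) / δ) := h
    _ ≤ log (2 * log (3 / (2 * c * δ)) / δ) := by gcongr

/-- Inversion bound: for `c > 0` and `0 < δ ≤ 1`, if `t ≥ 1` satisfies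
`(1/t) log(log(3t/2)/δ) ≥ c`, then `t ≤ (1/c) log(2 log(3/(2cδ))/δ)`. -/
theorem stmt15 (c δ t : ℝ) (hc : 0 < c) (hδ0 : 0 < δ) (hδ1 : δ ≤ 1) (ht : 1 ≤ t)
    (h : c ≤ (1 / t) * Real.log (Real.log (3 * t / 2) / δ)) :
    t ≤ (1 / c) * Real.log (2 * Real.log (3 / (2 * c * δ)) / δ) :=
  stmt15_general c δ t hc hδ0 ht h
end

section
/- Under the same setting (finite S, optimal x* ∈ S for c, estimate ĉ with |(x−y)ᵀ(ĉ−c)| ≤ ε/λ for all x,y ∈ S, λ = 10), every point s ∈ S with cᵀ(x* − s) > ε satisfies ĉᵀs < ĉᵀx̂ − ε/2 − 2ε/λ, where x̂ maximizes ĉᵀx over S; hence all points more than ε suboptimal are eliminated. -/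
theorem sum_mul_sub_le_of_abs_sum_sub_mul_le {ι : Type*} [Fintype ι] (c chat x y : ι → ℝ) {δ : ℝ}
    (hacc : |∑ i, (x i - y i) * (chat i - c i)| ≤ δ) :
    ∑ i, c i * (x i - y i) - δ ≤ ∑ i, chat i * x i - ∑ i, chat i * y i := by
  have hsplit : ∑ i, chat i * x i - ∑ i, chat i * y i
      = ∑ i, c i * (x i - y i) + ∑ i, (x i - y i) * (chat i - c i) := by
    rw [← Finset.sum_sub_distrib, ← Finset.sum_add_distrib]
    exact Finset.sum_congr rfl fun i _ => by ring
  linarith [neg_abs_le (∑ i, (x i - y i) * (chat i - c i))]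

theorem stmt17_general (n : ℕ) (S : Finset (Fin n → ℝ)) (c chat xstar xhat s : Fin n → ℝ)
    (ε : ℝ)
    (hxstar : xstar ∈ S)
    (hacc : ∀ x ∈ S, ∀ y ∈ S,
      |∑ i, (x i - y i) * (chat i - c i)| ≤ ε / 10)
    (hhatopt : ∀ y ∈ S, (∑ i, chat i * y i) ≤ ∑ i, chat i * xhat i)
    (hs : s ∈ S) (hfar : ε < ∑ i, c i * (xstar i - s i)) :
    (∑ i, chat i * s i) < (∑ i, chat i * xhat i) - ε / 2 - 2 * ε / 10 := by
  have hε : 0 ≤ ε / 10 := (abs_nonneg _).trans (hacc xstar hxstar s hs)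
  have hgap := sum_mul_sub_le_of_abs_sum_sub_mul_le c chat xstar s (hacc xstar hxstar s hs)
  -- `ĉᵀs < ĉᵀx* − 9ε/10 ≤ ĉᵀx̂ − 9ε/10`, and `9ε/10 ≥ ε/2 + 2ε/10` as `ε ≥ 0`.
  linarith [hhatopt xstar hxstar]

/-- Successive elimination removes all far-from-optimal points: under the same
setting as the retention lemma (`λ = 10`), every `s ∈ S` with
`cᵀ(x* − s) > ε` satisfies `ĉᵀs < ĉᵀx̂ − ε/2 − 2ε/λ` and hence is eliminated. -/
theorem stmt17 (n : ℕ) (S : Finset (Fin n → ℝ)) (c chat xstar xhat s : Fin n → ℝ)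
    (ε : ℝ) (hε : 0 < ε)
    (hxstar : xstar ∈ S)
    (hopt : ∀ y ∈ S, (∑ i, c i * y i) ≤ ∑ i, c i * xstar i)
    (hacc : ∀ x ∈ S, ∀ y ∈ S,
      |∑ i, (x i - y i) * (chat i - c i)| ≤ ε / 10)
    (hxhat : xhat ∈ S)
    (hhatopt : ∀ y ∈ S, (∑ i, chat i * y i) ≤ ∑ i, chat i * xhat i)
    (hs : s ∈ S) (hfar : ε < ∑ i, c i * (xstar i - s i)) :
    (∑ i, chat i * s i) < (∑ i, chat i * xhat i) - ε / 2 - 2 * ε / 10 :=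
  stmt17_general n S c chat xstar xhat s ε hxstar hacc hhatopt hs hfar
end
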